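/- With the notation of the previous setting, for all t ∈ [0,1]: ‖x(t) − y(t)‖ ≤ max_{0≤i≤m+n} [ Σ_{j=max(0,i−m)}^{min(n,i)} k_{ij} ‖p_j − q_{i−j}‖ ] / [ Σ_{j=max(0,i−m)}^{min(n,i)} k_{ij} ], where k_{ij} = C(n,j) C(m,i−j) ω_j. -/

import Mathlib

open Finset

/-- The Bernstein basis polynomial `B_i^n(t) = C(n,i) t^i (1-t)^(n-i)`. -/
noncomputable def bern (n i : ℕ) (t : ℝ) : ℝ := (n.choose i : ℝ) * t ^ i * (1 - t) ^ (n - i)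

/-! Let `W = ∑ ω_i B_i^n(t)`. Since `∑ B_j^m(t) = 1`,
`W (x - y) = ∑_{i,j} ω_i B_i^n B_j^m (p_i - q_j)`.
Grouping by total degree `s = i + j`, where `B_i^n B_j^m = C(n,i) C(m,j) t^s (1-t)^(m+n-s)`, both
`W` and `W (x - y)` are combinations, with the nonnegative coefficients `t^s (1-t)^(m+n-s)`, of the
`s`-th denominators `∑ k_{sj}` and of the vectors `∑ k_{sj} (p_j - q_{s-j})`. The triangle
inequality followed by the mediant inequality `∑ c_s A_s ≤ (max_s A_s / K_s) ∑ c_s K_s` then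
bounds `‖x - y‖` by the maximal ratio. -/
theorem sum_bern (n : ℕ) (t : ℝ) : ∑ i ∈ range (n + 1), bern n i t = 1 := by
  have h := (add_pow t (1 - t) n).symm
  rw [add_sub_cancel, one_pow] at h
  rw [← h]
  exact sum_congr rfl fun i _ => by unfold bern; ring

theorem bern_nonneg (n i : ℕ) {t : ℝ} (ht : t ∈ Set.Icc (0 : ℝ) 1) : 0 ≤ bern n i t := by
  have : 0 ≤ 1 - t := sub_nonneg.mpr ht.2
  have := ht.1
  unfold bern; positivity

theorem bern_mul_bern {n m i j : ℕ} (hi : i ≤ n) (hj : j ≤ m) (t : ℝ) :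
    bern n i t * bern m j t
      = n.choose i * m.choose j * (t ^ (i + j) * (1 - t) ^ (m + n - (i + j))) := by
  rw [show m + n - (i + j) = (n - i) + (m - j) by omega, pow_add, pow_add]
  unfold bern; ring

theorem sum_range_sum_range_eq_sum_range_sum_Icc {M : Type*} [AddCommMonoid M] (n m : ℕ)
    (f : ℕ → ℕ → M) :
    ∑ i ∈ range (n + 1), ∑ j ∈ range (m + 1), f i j
      = ∑ s ∈ range (m + n + 1), ∑ i ∈ Icc (s - m) (min n s), f i (s - i) := by
  rw [sum_sigma', sum_sigma']
  refine sum_bij' (fun x _ => ⟨x.1 + x.2, x.1⟩) (fun y _ => ⟨y.2, y.1 - y.2⟩) ?_ ?_ ?_ ?_ ?_ <;>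
    rintro ⟨a, b⟩ h <;> simp only [mem_sigma, mem_range, mem_Icc, le_min_iff] at h ⊢
  all_goals first | omega | simp only [Nat.add_sub_cancel_left] | rw [Nat.add_sub_cancel' h.2.2.2]

theorem sum_smul_bern_mul_bern {E : Type*} [AddCommGroup E] [Module ℝ E] (n m : ℕ) (a : ℕ → ℝ)
    (f : ℕ → ℕ → E) (t : ℝ) :
    ∑ i ∈ range (n + 1), ∑ j ∈ range (m + 1), (a i * bern n i t * bern m j t) • f i j
      = ∑ s ∈ range (m + n + 1), (t ^ s * (1 - t) ^ (m + n - s)) •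
          ∑ i ∈ Icc (s - m) (min n s),
            ((n.choose i : ℝ) * m.choose (s - i) * a i) • f i (s - i) := by
  rw [sum_range_sum_range_eq_sum_range_sum_Icc]
  refine sum_congr rfl fun s hs => ?_
  rw [smul_sum]
  refine sum_congr rfl fun i hi => ?_
  simp only [mem_range, mem_Icc, le_min_iff] at hs hi
  rw [smul_smul, mul_assoc, bern_mul_bern hi.2.1 (by omega), Nat.add_sub_cancel' hi.2.2]
  ring_nf

theorem sum_mul_bern_pos {n : ℕ} {ω : ℕ → ℝ} (hω : ∀ i ≤ n, 0 < ω i) {t : ℝ}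
    (ht : t ∈ Set.Icc (0 : ℝ) 1) : 0 < ∑ i ∈ range (n + 1), ω i * bern n i t := by
  obtain ⟨i, hi, hbi⟩ : ∃ i ∈ range (n + 1), (0 : ℝ) < bern n i t :=
    exists_lt_of_sum_lt (by simp [sum_bern])
  have hω' : ∀ i ∈ range (n + 1), 0 < ω i := fun i hi => hω i (Nat.lt_succ_iff.mp (mem_range.mp hi))
  exact sum_pos' (fun j hj => mul_nonneg (hω' j hj).le (bern_nonneg n j ht))
    ⟨i, hi, mul_pos (hω' i hi) hbi⟩

theorem inv_smul_sum_smul_sub_sum_smul {ι κ E : Type*} [AddCommGroup E] [Module ℝ E]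
    (s : Finset ι) (u : Finset κ) (a : ι → ℝ) (b : κ → ℝ) (p : ι → E) (q : κ → E)
    (hb : ∑ j ∈ u, b j = 1) (ha : ∑ i ∈ s, a i ≠ 0) :
    (∑ i ∈ s, a i)⁻¹ • ∑ i ∈ s, a i • p i - ∑ j ∈ u, b j • q j
      = (∑ i ∈ s, a i)⁻¹ • ∑ i ∈ s, ∑ j ∈ u, (a i * b j) • (p i - q j) := by
  have : ∑ i ∈ s, ∑ j ∈ u, (a i * b j) • (p i - q j)
      = ∑ i ∈ s, a i • p i - (∑ i ∈ s, a i) • ∑ j ∈ u, b j • q j := by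
    simp_rw [smul_sub, sum_sub_distrib, ← sum_smul, ← mul_sum, hb, mul_one, sum_smul, smul_sum,
      smul_smul]
  rw [this, smul_sub, smul_smul, inv_mul_cancel₀ ha, one_smul]

theorem norm_sum_smul_sum_smul_le {ι κ E : Type*} [SeminormedAddCommGroup E] [NormedSpace ℝ E]
    (S : Finset ι) (T : ι → Finset κ) (c : ι → ℝ) (k : ι → κ → ℝ) (v : ι → κ → E)
    (hc : ∀ s ∈ S, 0 ≤ c s) (hk : ∀ s ∈ S, ∀ i ∈ T s, 0 ≤ k s i) :
    ‖∑ s ∈ S, c s • ∑ i ∈ T s, k s i • v s i‖ ≤ ∑ s ∈ S, c s * ∑ i ∈ T s, k s i * ‖v s i‖ := by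
  refine (norm_sum_le _ _).trans (sum_le_sum fun s hs => ?_)
  rw [norm_smul, Real.norm_of_nonneg (hc s hs)]
  refine mul_le_mul_of_nonneg_left ((norm_sum_le _ _).trans (sum_le_sum fun i hi => ?_)) (hc s hs)
  rw [norm_smul, Real.norm_of_nonneg (hk s hs i hi)]

theorem sum_mul_le_sup'_div_mul_sum {ι : Type*} (S : Finset ι) (hS : S.Nonempty) (c A K : ι → ℝ)
    (hc : ∀ s ∈ S, 0 ≤ c s) (hK : ∀ s ∈ S, 0 < K s) :
    ∑ s ∈ S, c s * A s ≤ S.sup' hS (fun s => A s / K s) * ∑ s ∈ S, c s * K s := by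
  rw [mul_sum]
  refine sum_le_sum fun s hs => ?_
  calc c s * A s = c s * (A s / K s * K s) := by rw [div_mul_cancel₀ _ (hK s hs).ne']
    _ ≤ c s * (S.sup' hS (fun s => A s / K s) * K s) := by
      gcongr
      · exact hc s hs
      · exact (hK s hs).le
      · exact le_sup' (fun s => A s / K s) hs
    _ = _ := by ring

theorem rational_bezier_approx_weighted_error_bound (d m n : ℕ) (ω : ℕ → ℝ)
    (hω : ∀ i ≤ n, 0 < ω i)
    (p q : ℕ → EuclideanSpace ℝ (Fin d)) (t : ℝ) (ht : t ∈ Set.Icc (0:ℝ) 1) :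
    ‖(∑ i ∈ range (n + 1), ω i * bern n i t)⁻¹ •
        (∑ i ∈ range (n + 1), (ω i * bern n i t) • p i)
      - ∑ j ∈ range (m + 1), bern m j t • q j‖
      ≤ (range (m + n + 1)).sup' nonempty_range_add_one (fun i =>
          (∑ j ∈ Finset.Icc (i - m) (min n i),
              ((n.choose j : ℝ) * (m.choose (i - j)) * ω j) * ‖p j - q (i - j)‖)
          / (∑ j ∈ Finset.Icc (i - m) (min n i),
              (n.choose j : ℝ) * (m.choose (i - j)) * ω j)) := by
  have hW := sum_mul_bern_pos hω ht
  have hc : ∀ s ∈ range (m + n + 1), 0 ≤ t ^ s * (1 - t) ^ (m + n - s) := fun s _ => by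
    have := sub_nonneg.mpr ht.2
    have := ht.1
    positivity
  have hk : ∀ s ∈ range (m + n + 1), ∀ j ∈ Icc (s - m) (min n s),
      0 < (n.choose j : ℝ) * m.choose (s - j) * ω j := fun s _ j hj => by
    simp only [mem_Icc, le_min_iff] at hj
    have := Nat.choose_pos hj.2.1
    have := Nat.choose_pos (show s - j ≤ m by omega)
    have := hω j hj.2.1
    positivity
  have hK : ∀ s ∈ range (m + n + 1), 0 < ∑ j ∈ Icc (s - m) (min n s),
      (n.choose j : ℝ) * m.choose (s - j) * ω j := fun s hs =>
    sum_pos (hk s hs) ⟨min n s, mem_Icc.mpr ⟨by simp at hs; omega, le_rfl⟩⟩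
  have hW_eq := sum_smul_bern_mul_bern n m ω (fun _ _ => (1 : ℝ)) t
  simp only [smul_eq_mul, mul_one, ← mul_sum, sum_bern] at hW_eq
  rw [inv_smul_sum_smul_sub_sum_smul _ _ _ _ _ _ (sum_bern m t) hW.ne', sum_smul_bern_mul_bern,
    norm_smul, Real.norm_of_nonneg (inv_nonneg.mpr hW.le)]
  calc _ ≤ _ := mul_le_mul_of_nonneg_left (norm_sum_smul_sum_smul_le _ _ _ _ _ hc
        fun s hs j hj => (hk s hs j hj).le) (inv_nonneg.mpr hW.le)
    _ ≤ _ := mul_le_mul_of_nonneg_left (sum_mul_le_sup'_div_mul_sum _ _ _ _ _ hc hK)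
        (inv_nonneg.mpr hW.le)
    _ = _ := by rw [← hW_eq, mul_comm, mul_assoc, mul_inv_cancel₀ hW.ne', mul_one]
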